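/- arXiv:2212.09835 — 2 statements merged into one kernel-verified Lean document; each statement's English description precedes it below -/
import Mathlib

section
/- The series A := ∑_{n≥1} g_n * (27/256)^n is summable and its sum satisfies A > 0 (indeed A ≥ 27/256, since g_1 = 1). -/
/-- `gseq n` is the number `g_n = 2·(4n+1)!/((n+1)!·(3n+2)!)` of rooted 3-connected
planar triangulations with `2n+2` faces (as a real number), with `g_0 = 0`. -/
noncomputable def gseq (n : ℕ) : ℝ :=
  if n = 0 then 0
  else 2 * (Nat.factorial (4 * n + 1)) / ((Nat.factorial (n + 1)) * (Nat.factorial (3 * n + 2)))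

lemma gseq_nonneg (n : ℕ) : 0 ≤ gseq n := by
  unfold gseq; split
  · exact le_refl 0
  · positivity

lemma gseq_ratio (n : ℕ) :
    gseq (n+2) * ((n+3)*(3*n+6)*(3*n+7)*(3*n+8)) =
      gseq (n+1) * ((4*n+6)*(4*n+7)*(4*n+8)*(4*n+9)) := by
  have e1 : (4*(n+2)+1).factorial
      = (4*n+9)*((4*n+8)*((4*n+7)*((4*n+6)*(4*(n+1)+1).factorial))) := by
    rw [show 4*(n+2)+1 = (4*n+8)+1 by ring, Nat.factorial_succ,
        show 4*n+8 = (4*n+7)+1 by ring, Nat.factorial_succ,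
        show 4*n+7 = (4*n+6)+1 by ring, Nat.factorial_succ,
        show 4*n+6 = (4*(n+1)+1)+1 by ring, Nat.factorial_succ]
    ring
  have e2 : ((n+2)+1).factorial = (n+3)*((n+1)+1).factorial := by
    rw [show (n+2)+1 = (n+2)+1 from rfl, Nat.factorial_succ]
  have e3 : (3*(n+2)+2).factorial
      = (3*n+8)*((3*n+7)*((3*n+6)*(3*(n+1)+2).factorial)) := by
    rw [show 3*(n+2)+2 = (3*n+7)+1 by ring, Nat.factorial_succ,
        show 3*n+7 = (3*n+6)+1 by ring, Nat.factorial_succ,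
        show 3*n+6 = (3*(n+1)+2)+1 by ring, Nat.factorial_succ]
    ring
  unfold gseq
  rw [if_neg (by omega), if_neg (by omega)]
  rw [e1, e2, e3]
  push_cast
  have h1 : ((4*(n+1)+1).factorial : ℝ) ≠ 0 := by positivity
  have h2 : (((n+1)+1).factorial : ℝ) ≠ 0 := by positivity
  have h3 : ((3*(n+1)+2).factorial : ℝ) ≠ 0 := by positivity
  field_simp

lemma abound3 : ∀ k : ℕ, gseq (k+3) * (27/256 : ℝ)^(k+3) ≤ 1/((k:ℝ)+3)^2 := by
  intro k
  induction k with
  | zero => norm_num [gseq, Nat.factorial]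
  | succ k ih =>
    set x : ℝ := (k : ℝ) with hx
    have hx0 : 0 ≤ x := Nat.cast_nonneg k
    have hD : (0:ℝ) < (x+5)*(3*x+12)*(3*x+13)*(3*x+14) := by positivity
    have hr : gseq (k+4) * ((x+5)*(3*x+12)*(3*x+13)*(3*x+14)) =
        gseq (k+3) * ((4*x+14)*(4*x+15)*(4*x+16)*(4*x+17)) := by
      have h := gseq_ratio (k+2)
      rw [show k+2+2 = k+4 from rfl, show k+2+1 = k+3 from rfl] at h
      push_cast at h
      linear_combination h
    have hS : gseq (k+4) = gseq (k+3) * ((4*x+14)*(4*x+15)*(4*x+16)*(4*x+17))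
        / ((x+5)*(3*x+12)*(3*x+13)*(3*x+14)) := by
      rw [eq_div_iff hD.ne']
      linear_combination hr
    have hG : 0 ≤ gseq (k+3) * (27/256 : ℝ)^(k+3) :=
      mul_nonneg (gseq_nonneg _) (by positivity)
    have ihm : gseq (k+3) * (27/256 : ℝ)^(k+3) * (x+3)^2 ≤ 1 := by
      have h2 : (0:ℝ) < (x+3)^2 := by positivity
      calc gseq (k+3) * (27/256 : ℝ)^(k+3) * (x+3)^2
          ≤ (1/(x+3)^2) * (x+3)^2 := mul_le_mul_of_nonneg_right ih h2.le
        _ = 1 := by field_simp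
    have P : (27/256 : ℝ) * ((4*x+14)*(4*x+15)*(4*x+16)*(4*x+17)) * (x+4)^2
        ≤ ((x+5)*(3*x+12)*(3*x+13)*(3*x+14)) * (x+3)^2 := by
      nlinarith [pow_nonneg hx0 2, pow_nonneg hx0 3, pow_nonneg hx0 4, pow_nonneg hx0 5, hx0]
    have goal2 : gseq (k+4) * (27/256 : ℝ)^(k+4) ≤ 1/(x+4)^2 := by
      rw [hS, div_mul_eq_mul_div, div_le_div_iff₀ hD (by positivity : (0:ℝ) < (x+4)^2)]
      have key : (gseq (k+3) * (27/256 : ℝ)^(k+3)) *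
          ((27/256 : ℝ) * ((4*x+14)*(4*x+15)*(4*x+16)*(4*x+17)) * (x+4)^2)
          ≤ ((x+5)*(3*x+12)*(3*x+13)*(3*x+14)) := by
        calc (gseq (k+3) * (27/256 : ℝ)^(k+3)) *
              ((27/256 : ℝ) * ((4*x+14)*(4*x+15)*(4*x+16)*(4*x+17)) * (x+4)^2)
            ≤ (gseq (k+3) * (27/256 : ℝ)^(k+3)) *
              (((x+5)*(3*x+12)*(3*x+13)*(3*x+14)) * (x+3)^2) :=
              mul_le_mul_of_nonneg_left P hG
          _ = ((x+5)*(3*x+12)*(3*x+13)*(3*x+14)) *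
              (gseq (k+3) * (27/256 : ℝ)^(k+3) * (x+3)^2) := by ring
          _ ≤ ((x+5)*(3*x+12)*(3*x+13)*(3*x+14)) * 1 :=
              mul_le_mul_of_nonneg_left ihm hD.le
          _ = ((x+5)*(3*x+12)*(3*x+13)*(3*x+14)) := mul_one _
      calc gseq (k+3) * ((4*x+14)*(4*x+15)*(4*x+16)*(4*x+17)) * (27/256 : ℝ)^(k+4) * (x+4)^2
          = (gseq (k+3) * (27/256 : ℝ)^(k+3)) *
            ((27/256 : ℝ) * ((4*x+14)*(4*x+15)*(4*x+16)*(4*x+17)) * (x+4)^2) := by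
            rw [pow_succ]; ring
        _ ≤ ((x+5)*(3*x+12)*(3*x+13)*(3*x+14)) := key
        _ = 1 * ((x+5)*(3*x+12)*(3*x+13)*(3*x+14)) := (one_mul _).symm
    have : ((k+1 : ℕ) : ℝ) + 3 = x + 4 := by push_cast; ring
    rw [show k+1+3 = k+4 from rfl, this]
    exact goal2

lemma abound (n : ℕ) : gseq n * (27/256 : ℝ)^n ≤ 1/(n:ℝ)^2 := by
  match n with
  | 0 => simp [gseq]
  | 1 => norm_num [gseq, Nat.factorial]
  | 2 => norm_num [gseq, Nat.factorial]
  | (k+3) =>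
    have h := abound3 k
    have : ((k+3 : ℕ) : ℝ) = (k:ℝ) + 3 := by push_cast; ring
    rw [this]
    exact h

/-- The series `A = ∑_{n≥1} g_n (27/256)ⁿ` is summable, and its sum satisfies
`A > 0`, indeed `A ≥ 27/256`. -/
theorem stmt_2 :
    Summable (fun n : ℕ => gseq n * (27 / 256 : ℝ) ^ n) ∧
      0 < ∑' n : ℕ, gseq n * (27 / 256 : ℝ) ^ n ∧
      27 / 256 ≤ ∑' n : ℕ, gseq n * (27 / 256 : ℝ) ^ n := by
  have hnn : ∀ n : ℕ, 0 ≤ gseq n * (27 / 256 : ℝ) ^ n :=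
    fun n => mul_nonneg (gseq_nonneg n) (by positivity)
  have hs2 : Summable (fun n : ℕ => 1/(n:ℝ)^2) := by
    have := Real.summable_one_div_nat_pow.mpr (by norm_num : 1 < 2)
    simpa using this
  have hsum : Summable (fun n : ℕ => gseq n * (27 / 256 : ℝ) ^ n) :=
    Summable.of_nonneg_of_le hnn (fun n => abound n) hs2
  have h1 : gseq 1 * (27 / 256 : ℝ) ^ 1 ≤ ∑' n : ℕ, gseq n * (27 / 256 : ℝ) ^ n :=
    Summable.le_tsum hsum 1 (fun j _ => hnn j)
  have hv : gseq 1 * (27 / 256 : ℝ) ^ 1 = 27/256 := by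
    norm_num [gseq, Nat.factorial]
  rw [hv] at h1
  exact ⟨hsum, by linarith, h1⟩
end

section
/- Let A = ∑_{n≥1} g_n * (27/256)^n. Then n^(5/2) * (27/256)^n * (∑_{k=0}^{n} g_k * g_{n-k}) tends to 2 * A * (16/27) * sqrt(3/(2π)) as n → ∞. -/
/-!
Put `a n = g n * (27/256)^n`. Since `g n` is a rational function of `n` times `(4n choose n)`,
Stirling's formula gives `n^(5/2) * a n → (16/27) * √(3/(2π))`. For any real sequence with
`n^p * a n → C` and `p > 1`, the convolution satisfies `n^p * ∑ a k * a (n-k) → 2 * (∑ a) * C`: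
split the sum at `k = n/2` and reflect the upper half; each half is `∑ₖ a k * (n^p * a (n-k))`,
whose terms tend to `a k * C` and are dominated by `2^p * sup |m^p * a m| * |a k|`, so Tannery's
theorem applies.
-/

open Filter Topology

open Finset Asymptotics Real Stirling
open scoped Nat

theorem Finset.sum_range_mul_sub_eq_sum_filter_add_sum_filter {R : Type*} [CommSemiring R]
    (a : ℕ → R) (n : ℕ) :
    ∑ k ∈ range (n + 1), a k * a (n - k) =
      ∑ k ∈ (range (n + 1)).filter (fun k => 2 * k ≤ n), a k * a (n - k) +
        ∑ k ∈ (range (n + 1)).filter (fun k => 2 * k + 1 ≤ n), a k * a (n - k) := by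
  rw [← sum_filter_add_sum_filter_not (range (n + 1)) (fun k => 2 * k ≤ n)]
  congr 1
  refine sum_nbij' (fun k => n - k) (fun k => n - k) ?_ ?_ ?_ ?_ ?_ <;>
    intro k hk <;> simp only [mem_filter, mem_range, not_le] at hk ⊢
  · omega
  · omega
  · omega
  · omega
  · rw [Nat.sub_sub_self (by omega), mul_comm]

theorem pow_mul_sum_range_mul_sub {R : Type*} [CommSemiring R] (g : ℕ → R) (r : R) (n : ℕ) :
    r ^ n * ∑ k ∈ range (n + 1), g k * g (n - k) =
      ∑ k ∈ range (n + 1), (g k * r ^ k) * (g (n - k) * r ^ (n - k)) := by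
  rw [mul_sum]
  refine sum_congr rfl fun k hk => ?_
  rw [← pow_sub_mul_pow r (Nat.le_of_lt_succ (mem_range.mp hk))]
  ring

section PowerLawConvolution

variable {a : ℕ → ℝ} {p C : ℝ}

theorem summable_of_tendsto_rpow_mul (hp : 1 < p)
    (ha : Tendsto (fun n : ℕ => (n : ℝ) ^ p * a n) atTop (𝓝 C)) : Summable a := by
  refine summable_of_isBigO_nat (summable_nat_rpow.mpr (by linarith : -p < -1)) ?_
  have h : (fun n : ℕ => (n : ℝ) ^ (-p) * ((n : ℝ) ^ p * a n)) =O[atTop]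
      fun n : ℕ => (n : ℝ) ^ (-p) * 1 := (isBigO_refl _ _).mul (ha.isBigO_one ℝ)
  simp only [mul_one] at h
  refine h.congr' ?_ EventuallyEq.rfl
  filter_upwards [eventually_ne_atTop 0] with n hn
  rw [rpow_neg (Nat.cast_nonneg n), inv_mul_cancel_left₀]
  exact (rpow_pos_of_pos (Nat.cast_pos.mpr (Nat.pos_of_ne_zero hn)) p).ne'

theorem tendsto_rpow_mul_sub (ha : Tendsto (fun n : ℕ => (n : ℝ) ^ p * a n) atTop (𝓝 C))
    (k : ℕ) : Tendsto (fun n : ℕ => (n : ℝ) ^ p * a (n - k)) atTop (𝓝 C) := by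
  have hratio : Tendsto (fun m : ℕ => ((m : ℝ) / (m + k)) ^ p) atTop (𝓝 1) := by
    have := (continuousAt_rpow_const 1 p (Or.inl one_ne_zero)).tendsto.comp
      (tendsto_natCast_div_add_atTop (k : ℝ))
    rwa [one_rpow] at this
  have hshifted : Tendsto (fun m : ℕ => ((m + k : ℕ) : ℝ) ^ p * a m) atTop (𝓝 C) := by
    refine (div_one C ▸ ha.div hratio one_ne_zero).congr' ?_
    filter_upwards [eventually_ne_atTop 0] with m hm
    have hm' : (0 : ℝ) < m := by exact_mod_cast Nat.pos_of_ne_zero hm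
    rw [Pi.div_apply, div_rpow hm'.le (by positivity), Nat.cast_add]
    field_simp
  refine (hshifted.comp (tendsto_sub_atTop_nat k)).congr' ?_
  filter_upwards [eventually_ge_atTop k] with n hn
  simp only [Function.comp_apply, Nat.sub_add_cancel hn]

theorem tendsto_rpow_mul_sum_filter_two_mul_add_le (hp : 1 < p)
    (ha : Tendsto (fun n : ℕ => (n : ℝ) ^ p * a n) atTop (𝓝 C)) (c : ℕ) :
    Tendsto (fun n : ℕ => (n : ℝ) ^ p *
        ∑ k ∈ (range (n + 1)).filter (fun k => 2 * k + c ≤ n), a k * a (n - k))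
      atTop (𝓝 ((∑' k, a k) * C)) := by
  obtain ⟨B, hB⟩ := ha.abs.bddAbove_range
  have hB' (m : ℕ) : |(m : ℝ) ^ p * a m| ≤ B := hB ⟨m, rfl⟩
  -- for `2 * k ≤ n` one has `n ≤ 2 * (n - k)`, so the factor `n ^ p` costs at most `2 ^ p`
  have hbound (n k : ℕ) (hk : 2 * k + c ≤ n) : |(n : ℝ) ^ p * a (n - k)| ≤ 2 ^ p * B := by
    have hn : (n : ℝ) ≤ 2 * ((n - k : ℕ) : ℝ) := by exact_mod_cast (by omega : n ≤ 2 * (n - k))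
    calc |(n : ℝ) ^ p * a (n - k)| = (n : ℝ) ^ p * |a (n - k)| := by
          rw [abs_mul, abs_of_nonneg (by positivity)]
      _ ≤ (2 * ((n - k : ℕ) : ℝ)) ^ p * |a (n - k)| := by gcongr
      _ = 2 ^ p * |((n - k : ℕ) : ℝ) ^ p * a (n - k)| := by
          rw [mul_rpow (by norm_num) (by positivity), abs_mul,
            abs_of_nonneg (a := ((n - k : ℕ) : ℝ) ^ p) (by positivity), mul_assoc]
      _ ≤ 2 ^ p * B := by gcongr; exact hB' _
  have hdom : Tendsto
      (fun n : ℕ => ∑' k, if 2 * k + c ≤ n then a k * ((n : ℝ) ^ p * a (n - k)) else 0)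
      atTop (𝓝 (∑' k, a k * C)) := by
    refine tendsto_tsum_of_dominated_convergence (bound := fun k => |a k| * (2 ^ p * B))
      ((summable_of_tendsto_rpow_mul hp ha).abs.mul_right _) (fun k => ?_)
      (Eventually.of_forall fun n k => ?_)
    · refine ((tendsto_rpow_mul_sub ha k).const_mul (a k)).congr' ?_
      filter_upwards [eventually_ge_atTop (2 * k + c)] with n hn
      rw [if_pos hn]
    · split_ifs with hk
      · rw [norm_mul, Real.norm_eq_abs, Real.norm_eq_abs]
        exact mul_le_mul_of_nonneg_left (hbound n k hk) (abs_nonneg _)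
      · have hB0 : 0 ≤ B := (abs_nonneg _).trans (hB' 0)
        rw [norm_zero]
        positivity
  rw [tsum_mul_right] at hdom
  refine hdom.congr fun n => ?_
  rw [mul_sum, sum_filter, tsum_eq_sum (s := range (n + 1))]
  · refine sum_congr rfl fun k _ => ?_
    split_ifs <;> ring
  · intro k hk
    rw [if_neg (by simp only [mem_range] at hk; omega)]

theorem tendsto_rpow_mul_sum_range_mul_sub (hp : 1 < p)
    (ha : Tendsto (fun n : ℕ => (n : ℝ) ^ p * a n) atTop (𝓝 C)) :
    Tendsto (fun n : ℕ => (n : ℝ) ^ p * ∑ k ∈ range (n + 1), a k * a (n - k))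
      atTop (𝓝 (2 * (∑' k, a k) * C)) := by
  have h := (tendsto_rpow_mul_sum_filter_two_mul_add_le hp ha 0).add
    (tendsto_rpow_mul_sum_filter_two_mul_add_le hp ha 1)
  simp only [add_zero, ← mul_add, ← sum_range_mul_sub_eq_sum_filter_add_sum_filter] at h
  convert h using 2
  ring

end PowerLawConvolution

theorem factorial_eq_stirlingSeq_mul {n : ℕ} (hn : n ≠ 0) :
    (n ! : ℝ) = stirlingSeq n * (√(2 * n) * (n / exp 1) ^ n) := by
  have : 0 < (n : ℝ) := by exact_mod_cast Nat.pos_of_ne_zero hn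
  rw [stirlingSeq, div_mul_cancel₀ _ (by positivity)]

theorem factorial_mul_eq_stirlingSeq_mul {c n : ℕ} (hc : c ≠ 0) (hn : n ≠ 0) :
    ((c * n) ! : ℝ) = stirlingSeq (c * n) * (√(2 * c) * √n * (c ^ c * (n / exp 1) ^ c) ^ n) := by
  rw [factorial_eq_stirlingSeq_mul (mul_ne_zero hc hn), Nat.cast_mul, mul_div_assoc, mul_pow,
    pow_mul, pow_mul, ← mul_pow, ← sqrt_mul (by positivity), mul_assoc]

theorem sqrt_mul_choose_mul_pow_eq {a b n : ℕ} (ha : a ≠ 0) (hb : b ≠ 0) (hn : n ≠ 0) :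
    √n * ((a + b) * n).choose (a * n) * ((a ^ a * b ^ b : ℝ) / (a + b) ^ (a + b)) ^ n =
      stirlingSeq ((a + b) * n) / (stirlingSeq (a * n) * stirlingSeq (b * n)) *
        √((a + b) / (2 * a * b)) := by
  rw [add_mul, Nat.cast_add_choose, ← add_mul, factorial_mul_eq_stirlingSeq_mul (by omega) hn,
    factorial_mul_eq_stirlingSeq_mul ha hn, factorial_mul_eq_stirlingSeq_mul hb hn]
  set x : ℝ := n / exp 1
  have hx : x ≠ 0 := by positivity
  have hpow : ((a + b : ℕ) ^ (a + b) * x ^ (a + b) : ℝ) ^ n *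
      ((a ^ a * b ^ b : ℝ) / (a + b) ^ (a + b)) ^ n =
        (a ^ a * x ^ a : ℝ) ^ n * (b ^ b * x ^ b) ^ n := by
    rw [← mul_pow _ _ n, ← mul_pow _ _ n, pow_add x]
    congr 1
    have : (a + b : ℝ) ≠ 0 := by positivity
    push_cast
    field_simp
  have hsqrt : √(2 * (a + b : ℕ)) = √((a + b) / (2 * a * b)) * (√(2 * a) * √(2 * b)) := by
    rw [← sqrt_mul (by positivity), ← sqrt_mul (by positivity)]
    congr 1
    push_cast
    field_simp
  have hs_ne (c : ℕ) (hc : c ≠ 0) : stirlingSeq (c * n) ≠ 0 :=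
    ((sqrt_pi_le_stirlingSeq (mul_ne_zero hc hn)).trans_lt' (by positivity)).ne'
  have := hs_ne a ha
  have := hs_ne b hb
  rw [hsqrt, mul_div_assoc]
  field_simp
  rw [mul_assoc, hpow, mul_assoc]

theorem tendsto_stirlingSeq_mul {c : ℕ} (hc : c ≠ 0) :
    Tendsto (fun n : ℕ => stirlingSeq (c * n)) atTop (𝓝 √π) :=
  tendsto_stirlingSeq_sqrt_pi.comp (tendsto_id.const_mul_atTop' (Nat.pos_of_ne_zero hc))

theorem tendsto_sqrt_mul_choose_mul_pow {a b : ℕ} (ha : a ≠ 0) (hb : b ≠ 0) :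
    Tendsto (fun n : ℕ =>
        √n * ((a + b) * n).choose (a * n) * ((a ^ a * b ^ b : ℝ) / (a + b) ^ (a + b)) ^ n)
      atTop (𝓝 √((a + b) / (2 * π * a * b))) := by
  have hlim := ((tendsto_stirlingSeq_mul (by omega : a + b ≠ 0)).div
    ((tendsto_stirlingSeq_mul ha).mul (tendsto_stirlingSeq_mul hb)) (by positivity)).mul_const
    √((a + b) / (2 * a * b))
  have hval : √π / (√π * √π) * √((a + b) / (2 * a * b)) = √((a + b) / (2 * π * a * b)) := by
    rw [show (a + b) / (2 * π * a * b) = (a + b) / (2 * a * b) / π by ring,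
      sqrt_div' _ pi_pos.le]
    have : √π ≠ 0 := by positivity
    field_simp
  rw [hval] at hlim
  refine hlim.congr' ?_
  filter_upwards [eventually_ne_atTop 0] with n hn
  exact (sqrt_mul_choose_mul_pow_eq ha hb hn).symm

theorem gseq_eq_mul_choose {n : ℕ} (hn : n ≠ 0) :
    gseq n = 2 * (4 * n + 1) / ((n + 1) * (3 * n + 1) * (3 * n + 2)) * (4 * n).choose n := by
  rw [gseq, if_neg hn, show 4 * n = n + 3 * n by ring, Nat.cast_add_choose, Nat.factorial_succ,
    Nat.factorial_succ, Nat.factorial_succ (3 * n + 1), Nat.factorial_succ (3 * n)]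
  push_cast
  field_simp
  ring

theorem tendsto_gseq_rational_factor :
    Tendsto (fun n : ℕ => 2 * (4 * n + 1) * (n : ℝ) ^ 2 / ((n + 1) * (3 * n + 1) * (3 * n + 2)))
      atTop (𝓝 (8 / 9)) := by
  have hf : ContinuousAt (fun x : ℝ => 2 * (4 + x) / ((1 + x) * (3 + x) * (3 + 2 * x))) 0 := by
    fun_prop (disch := norm_num)
  have h := hf.tendsto.comp (tendsto_inv_atTop_nhds_zero_nat (𝕜 := ℝ))
  norm_num at h
  refine h.congr' ?_
  filter_upwards [eventually_ne_atTop 0] with n hn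
  have : (n : ℝ) ≠ 0 := by exact_mod_cast hn
  simp only [Function.comp_apply]
  field_simp

theorem tendsto_rpow_mul_gseq_mul_pow :
    Tendsto (fun n : ℕ => (n : ℝ) ^ ((5 : ℝ) / 2) * (gseq n * (27 / 256 : ℝ) ^ n))
      atTop (𝓝 (16 / 27 * √(3 / (2 * π)))) := by
  have hchoose : Tendsto (fun n : ℕ => √n * (4 * n).choose n * (27 / 256 : ℝ) ^ n)
      atTop (𝓝 √(4 / (2 * π * 3))) := by
    convert tendsto_sqrt_mul_choose_mul_pow (a := 1) (b := 3) one_ne_zero three_ne_zero using 3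
    all_goals norm_num
  have hval : 8 / 9 * √(4 / (2 * π * 3)) = 16 / 27 * √(3 / (2 * π)) := by
    rw [show 4 / (2 * π * 3) = (2 / 3) ^ 2 * (3 / (2 * π)) by field_simp; ring,
      sqrt_mul (by positivity), sqrt_sq (by norm_num)]
    ring
  refine hval ▸ (tendsto_gseq_rational_factor.mul hchoose).congr' ?_
  filter_upwards [eventually_ne_atTop 0] with n hn
  have hn' : (0 : ℝ) < n := by exact_mod_cast Nat.pos_of_ne_zero hn
  rw [gseq_eq_mul_choose hn, show (5 : ℝ) / 2 = (2 : ℕ) + 1 / 2 by norm_num,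
    rpow_add hn', rpow_natCast, ← sqrt_eq_rpow]
  ring

/-- With `A = ∑_{n≥1} g_n (27/256)ⁿ`, one has
`n^(5/2)·(27/256)ⁿ·(∑_{k=0}^n g_k g_{n-k}) → 2·A·(16/27)·√(3/(2π))`. -/
theorem stmt_6 (A : ℝ) (hA : A = ∑' n : ℕ, gseq n * (27 / 256 : ℝ) ^ n) :
    Tendsto
      (fun n : ℕ =>
        (n : ℝ) ^ ((5 : ℝ) / 2) * (27 / 256 : ℝ) ^ n *
          ∑ k ∈ Finset.range (n + 1), gseq k * gseq (n - k))
      atTop (𝓝 (2 * A * (16 / 27) * Real.sqrt (3 / (2 * Real.pi)))) := by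
  have h := tendsto_rpow_mul_sum_range_mul_sub (by norm_num) tendsto_rpow_mul_gseq_mul_pow
  rw [← hA] at h
  convert h using 2 with n
  · rw [mul_assoc, pow_mul_sum_range_mul_sub]
  · ring
end
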